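/- arXiv:1902.05648 — 3 statements merged into one kernel-verified Lean document; each statement's English description precedes it below -/
import Mathlib

section
/- For variables X_1, …, X_k and any index j with 1 ≤ j ≤ k, the identity X_j^{k-1} = Σ_{a=0}^{k-1} (−1)^a · E_a(X_1, …, X̂_j, …, X_k) · H_{k-1-a}(X_1, …, X_k) holds in the polynomial ring ℚ[X_1,…,X_k], where E_a is the a-th elementary symmetric polynomial in the k−1 variables omitting X_j and H_b is the b-th complete homogeneous symmetric polynomial in all k variables. -/
open MvPolynomial

section aux

variable {σ : Type*} [DecidableEq σ]

/-- elementary symmetric polynomial in the variables of `s`. -/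
noncomputable def Ee (s : Finset σ) (a : ℕ) : MvPolynomial σ ℚ :=
  ∑ t ∈ Finset.powersetCard a s, ∏ i ∈ t, X i

/-- complete homogeneous symmetric polynomial in the variables of `s`. -/
noncomputable def Hh (s : Finset σ) (b : ℕ) : MvPolynomial σ ℚ :=
  ∑ m ∈ s.sym b, ((m : Multiset σ).map X).prod

lemma Ee_zero (s : Finset σ) : Ee s 0 = 1 := by simp [Ee]

lemma Hh_zero (s : Finset σ) : Hh s 0 = 1 := by
  simp [Hh, show ((∅ : Sym σ 0) : Multiset σ) = 0 from rfl]

lemma Ee_empty (a : ℕ) : Ee (∅ : Finset σ) (a + 1) = 0 := by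
  rw [Ee, Finset.powersetCard_eq_empty.mpr (by simp), Finset.sum_empty]

lemma Hh_empty (b : ℕ) : Hh (∅ : Finset σ) (b + 1) = 0 := by
  simp [Hh, Finset.sym_empty]

lemma Hh_rec {s : Finset σ} {i : σ} (hi : i ∈ s) (b : ℕ) :
    Hh s (b + 1) = Hh (s.erase i) (b + 1) + X i * Hh s b := by
  classical
  have hsplit := Finset.sum_filter_add_sum_filter_not (s.sym (b + 1)) (fun m => i ∈ m)
    (fun m => ((m : Multiset σ).map (X : σ → MvPolynomial σ ℚ)).prod)
  have h1 : (s.sym (b + 1)).filter (fun m => ¬ i ∈ m) = (s.erase i).sym (b + 1) := by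
    ext m
    simp only [Finset.mem_filter, Finset.mem_sym_iff, Finset.mem_erase]
    constructor
    · rintro ⟨h, hm⟩ a ha
      exact ⟨fun e => hm (e ▸ ha), h a ha⟩
    · intro h
      exact ⟨fun a ha => (h a ha).2, fun hm => (h i hm).1 rfl⟩
  have h2 : ∑ m ∈ (s.sym (b + 1)).filter (fun m => i ∈ m),
      ((m : Multiset σ).map X).prod = X i * Hh s b := by
    rw [Hh, Finset.mul_sum]
    refine Finset.sum_bij' (fun m hm => Sym.erase m i (Finset.mem_filter.mp hm).2)
      (fun m _ => i ::ₛ m) ?_ ?_ ?_ ?_ ?_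
    · intro m hm
      refine Finset.mem_sym_iff.mpr fun a ha => ?_
      have ham : a ∈ m := by
        have : a ∈ ((Sym.erase m i (Finset.mem_filter.mp hm).2 : Sym σ b) : Multiset σ) := ha
        rw [Sym.coe_erase] at this
        exact Multiset.mem_of_mem_erase this
      exact Finset.mem_sym_iff.mp (Finset.mem_filter.mp hm).1 a ham
    · intro m hm
      refine Finset.mem_filter.mpr ⟨Finset.mem_sym_iff.mpr fun a ha => ?_, Sym.mem_cons_self i m⟩
      rcases Sym.mem_cons.mp ha with h | h
      · exact h ▸ hi
      · exact Finset.mem_sym_iff.mp hm a h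
    · intro m hm
      exact Sym.cons_erase (Finset.mem_filter.mp hm).2
    · intro m hm
      exact Sym.erase_cons_head m i
    · intro m hm
      conv_lhs => rw [← Sym.cons_erase (Finset.mem_filter.mp hm).2]
      rw [Sym.coe_cons, Multiset.map_cons, Multiset.prod_cons]
  rw [Hh, ← hsplit, h2, h1, add_comm]
  rfl

lemma Ee_rec {s : Finset σ} {i : σ} (hi : i ∈ s) (a : ℕ) :
    Ee s (a + 1) = Ee (s.erase i) (a + 1) + X i * Ee (s.erase i) a := by
  classical
  have hins : insert i (s.erase i) = s := Finset.insert_erase hi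
  have hnot : i ∉ s.erase i := Finset.notMem_erase i s
  have hdisj : Disjoint (Finset.powersetCard (a + 1) (s.erase i))
      ((Finset.powersetCard a (s.erase i)).image (insert i)) := by
    rw [Finset.disjoint_left]
    intro t ht ht'
    have hsub : t ⊆ s.erase i := (Finset.mem_powersetCard.mp ht).1
    obtain ⟨u, hu, rfl⟩ := Finset.mem_image.mp ht'
    exact hnot (hsub (Finset.mem_insert_self i u))
  have hsplit : Finset.powersetCard (a + 1) s =
      Finset.powersetCard (a + 1) (s.erase i) ∪
        (Finset.powersetCard a (s.erase i)).image (insert i) := by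
    conv_lhs => rw [← hins]
    exact Finset.powersetCard_succ_insert hnot a
  rw [Ee, hsplit, Finset.sum_union hdisj]
  congr 1
  rw [Finset.sum_image, Ee, Finset.mul_sum]
  · refine Finset.sum_congr rfl fun t ht => ?_
    have hit : i ∉ t := fun h => hnot ((Finset.mem_powersetCard.mp ht).1 h)
    rw [Finset.prod_insert hit]
  · intro t ht u hu h
    have hit : i ∉ t := fun hh => hnot ((Finset.mem_powersetCard.mp ht).1 hh)
    have hiu : i ∉ u := fun hh => hnot ((Finset.mem_powersetCard.mp hu).1 hh)
    rw [← Finset.erase_insert hit, h, Finset.erase_insert hiu]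

/-- the alternating sum. -/
noncomputable def Zz (s : Finset σ) (n : ℕ) : MvPolynomial σ ℚ :=
  ∑ a ∈ Finset.range (n + 1), (-1 : MvPolynomial σ ℚ) ^ a * Ee s a * Hh s (n - a)

lemma Zz_zero (s : Finset σ) : Zz s 0 = 1 := by
  simp [Zz, Ee_zero, Hh_zero]

lemma Zz_rec {s : Finset σ} {i : σ} (hi : i ∈ s) (m : ℕ) :
    Zz s (m + 1) = Zz (s.erase i) (m + 1) - X i * Zz (s.erase i) m + X i * Zz s m := by
  classical
  set T := s.erase i with hT
  have step1 : Zz s (m + 1) =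
      (∑ a ∈ Finset.range (m + 2), (-1 : MvPolynomial σ ℚ) ^ a * Ee s a * Hh T (m + 1 - a))
        + X i * Zz s m := by
    rw [Zz, Zz, Finset.sum_range_succ, Finset.sum_range_succ (n := m + 1), Finset.mul_sum]
    have : ∀ a ∈ Finset.range (m + 1),
        (-1 : MvPolynomial σ ℚ) ^ a * Ee s a * Hh s (m + 1 - a) =
        (-1 : MvPolynomial σ ℚ) ^ a * Ee s a * Hh T (m + 1 - a)
          + X i * ((-1 : MvPolynomial σ ℚ) ^ a * Ee s a * Hh s (m - a)) := by
      intro a ha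
      have ha' : a ≤ m := Nat.lt_succ_iff.mp (Finset.mem_range.mp ha)
      have hsub : m + 1 - a = (m - a) + 1 := by omega
      rw [hsub, Hh_rec hi (m - a)]
      ring
    rw [Finset.sum_congr rfl this, Finset.sum_add_distrib]
    have hlast : m + 1 - (m + 1) = 0 := by omega
    rw [hlast, Hh_zero, Hh_zero]
    ring
  have step2 : (∑ a ∈ Finset.range (m + 2), (-1 : MvPolynomial σ ℚ) ^ a * Ee s a * Hh T (m + 1 - a))
      = Zz T (m + 1) - X i * Zz T m := by
    rw [Zz, Zz, Finset.sum_range_succ' _ (m + 1), Finset.sum_range_succ' _ (m + 1),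
      Finset.mul_sum]
    have : ∀ a ∈ Finset.range (m + 1),
        (-1 : MvPolynomial σ ℚ) ^ (a + 1) * Ee s (a + 1) * Hh T (m + 1 - (a + 1)) =
        (-1 : MvPolynomial σ ℚ) ^ (a + 1) * Ee T (a + 1) * Hh T (m + 1 - (a + 1))
          - X i * ((-1 : MvPolynomial σ ℚ) ^ a * Ee T a * Hh T (m - a)) := by
      intro a ha
      have hsub : m + 1 - (a + 1) = m - a := by omega
      rw [Ee_rec hi (a := a), hsub]
      ring
    rw [Finset.sum_congr rfl this, Finset.sum_sub_distrib]
    have h0 : Ee s 0 = Ee T 0 := by rw [Ee_zero, Ee_zero]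
    rw [h0]
    ring
  rw [step1, step2]

lemma Zz_succ (s : Finset σ) : ∀ n, Zz s (n + 1) = 0 := by
  induction s using Finset.strongInduction with
  | _ s ih =>
    rcases s.eq_empty_or_nonempty with rfl | ⟨i, hi⟩
    · intro n
      rw [Zz, Finset.sum_range_succ']
      simp [Ee_empty, Hh_empty, Ee_zero]
    · have hT : s.erase i ⊂ s := Finset.erase_ssubset hi
      intro n
      induction n with
      | zero =>
        rw [Zz_rec hi, ih _ hT 0, Zz_zero, Zz_zero]
        ring
      | succ m ihm =>
        rw [Zz_rec hi, ih _ hT (m + 1), ih _ hT m, ihm]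
        ring

lemma main_id {s : Finset σ} {i : σ} (hi : i ∈ s) (n : ℕ) :
    ∑ a ∈ Finset.range (n + 1),
      (-1 : MvPolynomial σ ℚ) ^ a * Ee (s.erase i) a * Hh s (n - a) = X i ^ n := by
  classical
  induction n with
  | zero => simp [Ee_zero, Hh_zero]
  | succ m ihm =>
    have step1 : ∑ a ∈ Finset.range (m + 2),
        (-1 : MvPolynomial σ ℚ) ^ a * Ee (s.erase i) a * Hh s (m + 1 - a) =
        Zz (s.erase i) (m + 1) + X i * ∑ a ∈ Finset.range (m + 1),
          (-1 : MvPolynomial σ ℚ) ^ a * Ee (s.erase i) a * Hh s (m - a) := by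
      rw [Zz, Finset.sum_range_succ, Finset.sum_range_succ (n := m + 1), Finset.mul_sum]
      have : ∀ a ∈ Finset.range (m + 1),
          (-1 : MvPolynomial σ ℚ) ^ a * Ee (s.erase i) a * Hh s (m + 1 - a) =
          (-1 : MvPolynomial σ ℚ) ^ a * Ee (s.erase i) a * Hh (s.erase i) (m + 1 - a)
            + X i * ((-1 : MvPolynomial σ ℚ) ^ a * Ee (s.erase i) a * Hh s (m - a)) := by
        intro a ha
        have ha' : a ≤ m := Nat.lt_succ_iff.mp (Finset.mem_range.mp ha)
        have hsub : m + 1 - a = (m - a) + 1 := by omega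
        rw [hsub, Hh_rec hi (m - a)]
        ring
      rw [Finset.sum_congr rfl this, Finset.sum_add_distrib]
      have hlast : m + 1 - (m + 1) = 0 := by omega
      rw [hlast, Hh_zero, Hh_zero]
      ring
    rw [step1, Zz_succ _ m, ihm]
    ring

end aux

/-- The `a`-th elementary symmetric polynomial in the `k−1` variables obtained by
omitting the variable `X j` (it is `0` if `a > k − 1`). -/
noncomputable def esymmOmit (k : ℕ) (j : Fin k) (a : ℕ) : MvPolynomial (Fin k) ℚ :=
  ∑ t ∈ Finset.powersetCard a (Finset.univ.erase j), ∏ i ∈ t, X i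

/-- The `b`-th complete homogeneous symmetric polynomial in all `k` variables:
the sum of all monomials of degree `b`. -/
noncomputable def hsymmAll (k b : ℕ) : MvPolynomial (Fin k) ℚ :=
  ∑ m : Sym (Fin k) b, ((m : Multiset (Fin k)).map X).prod

/-- `X_j^{k-1} = Σ_{a=0}^{k-1} (−1)^a E_a(X_1,…,X̂_j,…,X_k) H_{k-1-a}(X_1,…,X_k)`
in `ℚ[X_1,…,X_k]`. -/
theorem stmt_2 (k : ℕ) (j : Fin k) :
    (X j : MvPolynomial (Fin k) ℚ) ^ (k - 1) =
      ∑ a ∈ Finset.range k,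
        (-1 : MvPolynomial (Fin k) ℚ) ^ a * esymmOmit k j a * hsymmAll k (k - 1 - a) := by
  have hE : ∀ a, esymmOmit k j a = Ee (Finset.univ.erase j) a := fun a => rfl
  have hH : ∀ b, hsymmAll k b = Hh (Finset.univ : Finset (Fin k)) b := by
    intro b
    rw [hsymmAll, Hh, Finset.sym_univ]
  have hk : k - 1 + 1 = k := Nat.succ_pred_eq_of_pos j.pos
  have h := main_id (Finset.mem_univ j) (k - 1)
  rw [hk] at h
  rw [← h]
  exact Finset.sum_congr rfl fun a _ => by rw [hE, hH]
end

section
/- Let C_1, C_2, C_3, C_4 be chain complexes of vector spaces over ℚ with chain maps π_1 : C_1 → C_2, π_2 : C_3 → C_4, ι_1 : C_1 → C_3, ι_2 : C_2 → C_4, where π_1, π_2 are surjective, ι_1, ι_2 are injective, and ι_2 ∘ π_1 = −π_2 ∘ ι_1. Then the homology of the total complex of the bicomplex C_1 → C_2 ⊕ C_3 → C_4 (with horizontal differential π_1 + ι_1 and then π_2 + ι_2) is isomorphic to the homology of the subquotient complex (Ker π_2)/(Im ι_1 ∩ Ker π_2) of C_3. -/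
open LinearMap Submodule

section

/- Four chain complexes of `ℚ`-vector spaces indexed by `ℤ`, with differentials of
degree `−1` written as `dᵢ n : Vᵢ (n+1) →ₗ[ℚ] Vᵢ n`. -/
variable {V₁ V₂ V₃ V₄ : ℤ → Type}
variable [∀ n, AddCommGroup (V₁ n)] [∀ n, Module ℚ (V₁ n)]
variable [∀ n, AddCommGroup (V₂ n)] [∀ n, Module ℚ (V₂ n)]
variable [∀ n, AddCommGroup (V₃ n)] [∀ n, Module ℚ (V₃ n)]
variable [∀ n, AddCommGroup (V₄ n)] [∀ n, Module ℚ (V₄ n)]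

/-- The differential of the total complex of the bicomplex
`C₁ → C₂ ⊕ C₃ → C₄` (with horizontal maps `π₁, ι₁` out of `C₁` and `π₂, ι₂` into `C₄`,
the usual sign `(−1)^h` on the vertical differentials).
The total object in degree `n` is `V₁ n × V₂ (n+1) × V₃ (n+1) × V₄ (n+1+1)`
(i.e. `C₁` shifted by `{−1}` and `C₄` by `{+1}` relative to `C₂ ⊕ C₃`). -/
noncomputable def totalD
    (d₁ : ∀ n : ℤ, V₁ (n + 1) →ₗ[ℚ] V₁ n) (d₂ : ∀ n : ℤ, V₂ (n + 1) →ₗ[ℚ] V₂ n)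
    (d₃ : ∀ n : ℤ, V₃ (n + 1) →ₗ[ℚ] V₃ n) (d₄ : ∀ n : ℤ, V₄ (n + 1) →ₗ[ℚ] V₄ n)
    (π₁ : ∀ n : ℤ, V₁ n →ₗ[ℚ] V₂ n) (π₂ : ∀ n : ℤ, V₃ n →ₗ[ℚ] V₄ n)
    (ι₁ : ∀ n : ℤ, V₁ n →ₗ[ℚ] V₃ n) (ι₂ : ∀ n : ℤ, V₂ n →ₗ[ℚ] V₄ n) (n : ℤ) :
    (V₁ (n + 1) × V₂ (n + 1 + 1) × V₃ (n + 1 + 1) × V₄ (n + 1 + 1 + 1)) →ₗ[ℚ]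
      (V₁ n × V₂ (n + 1) × V₃ (n + 1) × V₄ (n + 1 + 1)) :=
  let p1 : (V₁ (n + 1) × V₂ (n + 1 + 1) × V₃ (n + 1 + 1) × V₄ (n + 1 + 1 + 1)) →ₗ[ℚ]
      V₁ (n + 1) := LinearMap.fst ℚ _ _
  let rest : (V₁ (n + 1) × V₂ (n + 1 + 1) × V₃ (n + 1 + 1) × V₄ (n + 1 + 1 + 1)) →ₗ[ℚ]
      (V₂ (n + 1 + 1) × V₃ (n + 1 + 1) × V₄ (n + 1 + 1 + 1)) := LinearMap.snd ℚ _ _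
  let p2 := (LinearMap.fst ℚ (V₂ (n + 1 + 1)) (V₃ (n + 1 + 1) × V₄ (n + 1 + 1 + 1))).comp rest
  let rest' := (LinearMap.snd ℚ (V₂ (n + 1 + 1)) (V₃ (n + 1 + 1) × V₄ (n + 1 + 1 + 1))).comp rest
  let p3 := (LinearMap.fst ℚ (V₃ (n + 1 + 1)) (V₄ (n + 1 + 1 + 1))).comp rest'
  let p4 := (LinearMap.snd ℚ (V₃ (n + 1 + 1)) (V₄ (n + 1 + 1 + 1))).comp rest'
  LinearMap.prod ((d₁ n).comp p1)
    (LinearMap.prod ((π₁ (n + 1)).comp p1 - (d₂ (n + 1)).comp p2)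
      (LinearMap.prod ((ι₁ (n + 1)).comp p1 - (d₃ (n + 1)).comp p3)
        ((ι₂ (n + 1 + 1)).comp p2 + (π₂ (n + 1 + 1)).comp p3 + (d₄ (n + 1 + 1)).comp p4)))
section AuxDefs

variable (d₁ : ∀ n : ℤ, V₁ (n + 1) →ₗ[ℚ] V₁ n) (d₂ : ∀ n : ℤ, V₂ (n + 1) →ₗ[ℚ] V₂ n)
variable (d₃ : ∀ n : ℤ, V₃ (n + 1) →ₗ[ℚ] V₃ n) (d₄ : ∀ n : ℤ, V₄ (n + 1) →ₗ[ℚ] V₄ n)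
variable (π₁ : ∀ n : ℤ, V₁ n →ₗ[ℚ] V₂ n) (π₂ : ∀ n : ℤ, V₃ n →ₗ[ℚ] V₄ n)
variable (ι₁ : ∀ n : ℤ, V₁ n →ₗ[ℚ] V₃ n) (ι₂ : ∀ n : ℤ, V₂ n →ₗ[ℚ] V₄ n)

theorem totalD_apply (n : ℤ)
    (z : V₁ (n + 1) × V₂ (n + 1 + 1) × V₃ (n + 1 + 1) × V₄ (n + 1 + 1 + 1)) :
    totalD d₁ d₂ d₃ d₄ π₁ π₂ ι₁ ι₂ n z =
      (d₁ n z.1, π₁ (n+1) z.1 - d₂ (n+1) z.2.1, ι₁ (n+1) z.1 - d₃ (n+1) z.2.2.1,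
        ι₂ (n+1+1) z.2.1 + π₂ (n+1+1) z.2.2.1 + d₄ (n+1+1) z.2.2.2) := rfl

/-- The submodule of "special cycles": pairs `(a, x)` with `π₁ a = 0`, `π₂ x = 0`,
`ι₁ a = d₃ x`. -/
def Sm (n : ℤ) : Submodule ℚ (V₁ (n + 1) × V₃ (n + 1 + 1)) where
  carrier := {p | π₁ (n + 1) p.1 = 0 ∧ π₂ (n + 1 + 1) p.2 = 0 ∧
    ι₁ (n + 1) p.1 = d₃ (n + 1) p.2}
  zero_mem' := by simp
  add_mem' := by
    rintro ⟨a, x⟩ ⟨b, y⟩ ⟨h1, h2, h3⟩ ⟨h4, h5, h6⟩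
    exact ⟨by simp [h1, h4], by simp [h2, h5], by simp [h3, h6]⟩
  smul_mem' := by
    rintro c ⟨a, x⟩ ⟨h1, h2, h3⟩
    exact ⟨by simp [h1], by simp [h2], by simp [h3]⟩

theorem mem_Sm (n : ℤ) (p : V₁ (n + 1) × V₃ (n + 1 + 1)) :
    p ∈ Sm d₃ π₁ π₂ ι₁ n ↔ (π₁ (n + 1) p.1 = 0 ∧ π₂ (n + 1 + 1) p.2 = 0 ∧
      ι₁ (n + 1) p.1 = d₃ (n + 1) p.2) := Iff.rfl

/-- inclusion of `V₁ × V₃` into the total module. -/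
def inclMap (n : ℤ) :
    (V₁ (n + 1) × V₃ (n + 1 + 1)) →ₗ[ℚ]
      (V₁ (n + 1) × V₂ (n + 1 + 1) × V₃ (n + 1 + 1) × V₄ (n + 1 + 1 + 1)) where
  toFun p := (p.1, 0, p.2, 0)
  map_add' p q := by simp [Prod.ext_iff]
  map_smul' c p := by simp [Prod.ext_iff]

theorem Sm_le_ker (hd₃ : ∀ n, (d₃ n).comp (d₃ (n + 1)) = 0)
    (hι₁ : ∀ n, Function.Injective (ι₁ n))
    (hcι₁ : ∀ n, (ι₁ n).comp (d₁ n) = (d₃ n).comp (ι₁ (n + 1))) (n : ℤ)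
    (p : Sm d₃ π₁ π₂ ι₁ n) :
    inclMap (V₁ := V₁) (V₂ := V₂) (V₄ := V₄) n p.1 ∈
      ker (totalD d₁ d₂ d₃ d₄ π₁ π₂ ι₁ ι₂ n) := by
  obtain ⟨⟨a, x⟩, h1, h2, h3⟩ := p
  have hda : d₁ n a = 0 := by
    apply hι₁ n
    have e1 := LinearMap.congr_fun (hcι₁ n) a
    have e2 := LinearMap.congr_fun (hd₃ n) x
    simp only [LinearMap.comp_apply, LinearMap.zero_apply] at e1 e2
    rw [map_zero, e1]
    simp only at h3
    rw [h3, e2]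
  rw [mem_ker, totalD_apply]
  simp [inclMap, hda, h1, h2, h3]

/-- The canonical map from `Sm` to the homology of the total complex. -/
noncomputable def Gmap (hd₃ : ∀ n, (d₃ n).comp (d₃ (n + 1)) = 0)
    (hι₁ : ∀ n, Function.Injective (ι₁ n))
    (hcι₁ : ∀ n, (ι₁ n).comp (d₁ n) = (d₃ n).comp (ι₁ (n + 1))) (n : ℤ) :
    (Sm d₃ π₁ π₂ ι₁ n) →ₗ[ℚ]
      (↥(ker (totalD d₁ d₂ d₃ d₄ π₁ π₂ ι₁ ι₂ n)) ⧸
        comap (ker (totalD d₁ d₂ d₃ d₄ π₁ π₂ ι₁ ι₂ n)).subtype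
          (range (totalD d₁ d₂ d₃ d₄ π₁ π₂ ι₁ ι₂ (n + 1)))) :=
  (comap (ker (totalD d₁ d₂ d₃ d₄ π₁ π₂ ι₁ ι₂ n)).subtype
      (range (totalD d₁ d₂ d₃ d₄ π₁ π₂ ι₁ ι₂ (n + 1)))).mkQ ∘ₗ
    LinearMap.codRestrict _ ((inclMap n).comp (Sm d₃ π₁ π₂ ι₁ n).subtype)
      (Sm_le_ker d₁ d₂ d₃ d₄ π₁ π₂ ι₁ ι₂ hd₃ hι₁ hcι₁ n)

theorem Gmap_apply (hd₃ : ∀ n, (d₃ n).comp (d₃ (n + 1)) = 0)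
    (hι₁ : ∀ n, Function.Injective (ι₁ n))
    (hcι₁ : ∀ n, (ι₁ n).comp (d₁ n) = (d₃ n).comp (ι₁ (n + 1))) (n : ℤ)
    (p : Sm d₃ π₁ π₂ ι₁ n)
    (h : ((p : V₁ (n+1) × V₃ (n+1+1)).1, (0 : V₂ (n+1+1)),
        (p : V₁ (n+1) × V₃ (n+1+1)).2, (0 : V₄ (n+1+1+1))) ∈
        ker (totalD d₁ d₂ d₃ d₄ π₁ π₂ ι₁ ι₂ n)) :
    Gmap d₁ d₂ d₃ d₄ π₁ π₂ ι₁ ι₂ hd₃ hι₁ hcι₁ n p =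
      Submodule.Quotient.mk ⟨(((p : V₁ (n+1) × V₃ (n+1+1)).1, (0 : V₂ (n+1+1)),
        (p : V₁ (n+1) × V₃ (n+1+1)).2, (0 : V₄ (n+1+1+1)))), h⟩ := rfl

end AuxDefs
section AuxDefs2

variable (d₃ : ∀ n : ℤ, V₃ (n + 1) →ₗ[ℚ] V₃ n) (d₄ : ∀ n : ℤ, V₄ (n + 1) →ₗ[ℚ] V₄ n)
variable (π₁ : ∀ n : ℤ, V₁ n →ₗ[ℚ] V₂ n) (π₂ : ∀ n : ℤ, V₃ n →ₗ[ℚ] V₄ n)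
variable (ι₁ : ∀ n : ℤ, V₁ n →ₗ[ℚ] V₃ n)
variable (δ : ∀ n : ℤ,
      (↥(ker (π₂ (n + 1))) ⧸ comap (ker (π₂ (n + 1))).subtype (range (ι₁ (n + 1)))) →ₗ[ℚ]
        (↥(ker (π₂ n)) ⧸ comap (ker (π₂ n)).subtype (range (ι₁ n))))

/-- `Sm` maps into `ker (δ (n+1))`. -/
theorem Sm_le_kerδ
    (hcπ₂ : ∀ n, (π₂ n).comp (d₃ n) = (d₄ n).comp (π₂ (n + 1)))
    (hδ : ∀ (n : ℤ) (x : V₃ (n + 1)) (hx : x ∈ ker (π₂ (n + 1)))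
        (hx' : d₃ n x ∈ ker (π₂ n)),
      δ n (Submodule.Quotient.mk ⟨x, hx⟩) = Submodule.Quotient.mk ⟨d₃ n x, hx'⟩)
    (n : ℤ) (p : Sm d₃ π₁ π₂ ι₁ n) :
    ((comap (ker (π₂ (n+1+1))).subtype (range (ι₁ (n+1+1)))).mkQ
      (⟨(p : V₁ (n+1) × V₃ (n+1+1)).2, p.2.2.1⟩ : ker (π₂ (n+1+1)))) ∈ ker (δ (n+1)) := by
  obtain ⟨⟨a, x⟩, h1, h2, h3⟩ := p
  have hx' : d₃ (n+1) x ∈ ker (π₂ (n+1)) := by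
    have e := LinearMap.congr_fun (hcπ₂ (n+1)) x
    simp only [LinearMap.comp_apply] at e
    simp only at h2
    rw [mem_ker, e, h2, map_zero]
  rw [mem_ker, Submodule.mkQ_apply, hδ (n+1) x h2 hx', Submodule.Quotient.mk_eq_zero]
  exact ⟨a, by simpa using h3⟩

/-- The canonical map from `Sm` to the homology of the subquotient complex. -/
noncomputable def Fmap
    (hcπ₂ : ∀ n, (π₂ n).comp (d₃ n) = (d₄ n).comp (π₂ (n + 1)))
    (hδ : ∀ (n : ℤ) (x : V₃ (n + 1)) (hx : x ∈ ker (π₂ (n + 1)))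
        (hx' : d₃ n x ∈ ker (π₂ n)),
      δ n (Submodule.Quotient.mk ⟨x, hx⟩) = Submodule.Quotient.mk ⟨d₃ n x, hx'⟩)
    (n : ℤ) :
    (Sm d₃ π₁ π₂ ι₁ n) →ₗ[ℚ]
      (↥(ker (δ (n + 1))) ⧸
        comap (ker (δ (n + 1))).subtype (range (δ (n + 1 + 1)))) :=
  (comap (ker (δ (n + 1))).subtype (range (δ (n + 1 + 1)))).mkQ ∘ₗ
    LinearMap.codRestrict (ker (δ (n + 1)))
      ((comap (ker (π₂ (n+1+1))).subtype (range (ι₁ (n+1+1)))).mkQ ∘ₗ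
        LinearMap.codRestrict (ker (π₂ (n+1+1)))
          ((LinearMap.snd ℚ _ _).comp (Sm d₃ π₁ π₂ ι₁ n).subtype) (fun p => p.2.2.1))
      (Sm_le_kerδ d₃ d₄ π₁ π₂ ι₁ δ hcπ₂ hδ n)

theorem Fmap_apply
    (hcπ₂ : ∀ n, (π₂ n).comp (d₃ n) = (d₄ n).comp (π₂ (n + 1)))
    (hδ : ∀ (n : ℤ) (x : V₃ (n + 1)) (hx : x ∈ ker (π₂ (n + 1)))
        (hx' : d₃ n x ∈ ker (π₂ n)),
      δ n (Submodule.Quotient.mk ⟨x, hx⟩) = Submodule.Quotient.mk ⟨d₃ n x, hx'⟩)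
    (n : ℤ) (p : Sm d₃ π₁ π₂ ι₁ n)
    (h2 : (p : V₁ (n+1) × V₃ (n+1+1)).2 ∈ ker (π₂ (n+1+1)))
    (hk : (Submodule.Quotient.mk ⟨(p : V₁ (n+1) × V₃ (n+1+1)).2, h2⟩ :
        ↥(ker (π₂ (n+1+1))) ⧸ comap (ker (π₂ (n+1+1))).subtype (range (ι₁ (n+1+1)))) ∈
        ker (δ (n+1))) :
    Fmap d₃ d₄ π₁ π₂ ι₁ δ hcπ₂ hδ n p =
      Submodule.Quotient.mk
        ⟨Submodule.Quotient.mk ⟨(p : V₁ (n+1) × V₃ (n+1+1)).2, h2⟩, hk⟩ := rfl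

end AuxDefs2
section AuxLemmas

variable (d₁ : ∀ n : ℤ, V₁ (n + 1) →ₗ[ℚ] V₁ n) (d₂ : ∀ n : ℤ, V₂ (n + 1) →ₗ[ℚ] V₂ n)
variable (d₃ : ∀ n : ℤ, V₃ (n + 1) →ₗ[ℚ] V₃ n) (d₄ : ∀ n : ℤ, V₄ (n + 1) →ₗ[ℚ] V₄ n)
variable (π₁ : ∀ n : ℤ, V₁ n →ₗ[ℚ] V₂ n) (π₂ : ∀ n : ℤ, V₃ n →ₗ[ℚ] V₄ n)
variable (ι₁ : ∀ n : ℤ, V₁ n →ₗ[ℚ] V₃ n) (ι₂ : ∀ n : ℤ, V₂ n →ₗ[ℚ] V₄ n)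
variable (δ : ∀ n : ℤ,
      (↥(ker (π₂ (n + 1))) ⧸ comap (ker (π₂ (n + 1))).subtype (range (ι₁ (n + 1)))) →ₗ[ℚ]
        (↥(ker (π₂ n)) ⧸ comap (ker (π₂ n)).subtype (range (ι₁ n))))
variable (hd₃ : ∀ n, (d₃ n).comp (d₃ (n + 1)) = 0)
variable (hι₁ : ∀ n, Function.Injective (ι₁ n))
variable (hcι₁ : ∀ n, (ι₁ n).comp (d₁ n) = (d₃ n).comp (ι₁ (n + 1)))
variable (hcπ₂ : ∀ n, (π₂ n).comp (d₃ n) = (d₄ n).comp (π₂ (n + 1)))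
variable (hδ : ∀ (n : ℤ) (x : V₃ (n + 1)) (hx : x ∈ ker (π₂ (n + 1)))
        (hx' : d₃ n x ∈ ker (π₂ n)),
      δ n (Submodule.Quotient.mk ⟨x, hx⟩) = Submodule.Quotient.mk ⟨d₃ n x, hx'⟩)

set_option maxHeartbeats 1000000 in
theorem Gmap_eq_mk_iff (n : ℤ) (a : V₁ (n+1)) (x : V₃ (n+1+1))
    (hp : (a, x) ∈ Sm d₃ π₁ π₂ ι₁ n) (z : ker (totalD d₁ d₂ d₃ d₄ π₁ π₂ ι₁ ι₂ n)) :
    Gmap d₁ d₂ d₃ d₄ π₁ π₂ ι₁ ι₂ hd₃ hι₁ hcι₁ n ⟨(a, x), hp⟩ = Submodule.Quotient.mk z ↔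
      ((a, (0 : V₂ (n+1+1)), x, (0 : V₄ (n+1+1+1))) -
        (z : V₁ (n+1) × V₂ (n+1+1) × V₃ (n+1+1) × V₄ (n+1+1+1))) ∈
        range (totalD d₁ d₂ d₃ d₄ π₁ π₂ ι₁ ι₂ (n + 1)) := by
  rw [Gmap_apply d₁ d₂ d₃ d₄ π₁ π₂ ι₁ ι₂ hd₃ hι₁ hcι₁ n ⟨(a, x), hp⟩
    (Sm_le_ker d₁ d₂ d₃ d₄ π₁ π₂ ι₁ ι₂ hd₃ hι₁ hcι₁ n ⟨(a, x), hp⟩),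
    Submodule.Quotient.eq]
  exact Iff.rfl

set_option maxHeartbeats 1000000 in
theorem Gmap_eq_zero_iff (n : ℤ) (a : V₁ (n+1)) (x : V₃ (n+1+1))
    (hp : (a, x) ∈ Sm d₃ π₁ π₂ ι₁ n) :
    Gmap d₁ d₂ d₃ d₄ π₁ π₂ ι₁ ι₂ hd₃ hι₁ hcι₁ n ⟨(a, x), hp⟩ = 0 ↔
      ((a, (0 : V₂ (n+1+1)), x, (0 : V₄ (n+1+1+1)))) ∈
        range (totalD d₁ d₂ d₃ d₄ π₁ π₂ ι₁ ι₂ (n + 1)) := by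
  rw [Gmap_apply d₁ d₂ d₃ d₄ π₁ π₂ ι₁ ι₂ hd₃ hι₁ hcι₁ n ⟨(a, x), hp⟩
    (Sm_le_ker d₁ d₂ d₃ d₄ π₁ π₂ ι₁ ι₂ hd₃ hι₁ hcι₁ n ⟨(a, x), hp⟩),
    Submodule.Quotient.mk_eq_zero]
  exact Iff.rfl

set_option maxHeartbeats 1000000 in
theorem Fmap_eq_zero_iff (n : ℤ) (a : V₁ (n+1)) (x : V₃ (n+1+1))
    (hp : (a, x) ∈ Sm d₃ π₁ π₂ ι₁ n) (h2 : x ∈ ker (π₂ (n+1+1))) :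
    Fmap d₃ d₄ π₁ π₂ ι₁ δ hcπ₂ hδ n ⟨(a, x), hp⟩ = 0 ↔
      (Submodule.Quotient.mk ⟨x, h2⟩ :
        ↥(ker (π₂ (n+1+1))) ⧸ comap (ker (π₂ (n+1+1))).subtype (range (ι₁ (n+1+1)))) ∈
        range (δ (n + 1 + 1)) := by
  rw [Fmap_apply d₃ d₄ π₁ π₂ ι₁ δ hcπ₂ hδ n ⟨(a, x), hp⟩ h2
    (Sm_le_kerδ d₃ d₄ π₁ π₂ ι₁ δ hcπ₂ hδ n ⟨(a, x), hp⟩),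
    Submodule.Quotient.mk_eq_zero]
  exact Iff.rfl

end AuxLemmas
section AuxMain

variable (d₁ : ∀ n : ℤ, V₁ (n + 1) →ₗ[ℚ] V₁ n) (d₂ : ∀ n : ℤ, V₂ (n + 1) →ₗ[ℚ] V₂ n)
variable (d₃ : ∀ n : ℤ, V₃ (n + 1) →ₗ[ℚ] V₃ n) (d₄ : ∀ n : ℤ, V₄ (n + 1) →ₗ[ℚ] V₄ n)
variable (π₁ : ∀ n : ℤ, V₁ n →ₗ[ℚ] V₂ n) (π₂ : ∀ n : ℤ, V₃ n →ₗ[ℚ] V₄ n)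
variable (ι₁ : ∀ n : ℤ, V₁ n →ₗ[ℚ] V₃ n) (ι₂ : ∀ n : ℤ, V₂ n →ₗ[ℚ] V₄ n)
variable (δ : ∀ n : ℤ,
      (↥(ker (π₂ (n + 1))) ⧸ comap (ker (π₂ (n + 1))).subtype (range (ι₁ (n + 1)))) →ₗ[ℚ]
        (↥(ker (π₂ n)) ⧸ comap (ker (π₂ n)).subtype (range (ι₁ n))))
variable (hd₃ : ∀ n, (d₃ n).comp (d₃ (n + 1)) = 0)
variable (hπ₁ : ∀ n, Function.Surjective (π₁ n)) (hπ₂ : ∀ n, Function.Surjective (π₂ n))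
variable (hι₁ : ∀ n, Function.Injective (ι₁ n)) (hι₂ : ∀ n, Function.Injective (ι₂ n))
variable (hcπ₁ : ∀ n, (π₁ n).comp (d₁ n) = (d₂ n).comp (π₁ (n + 1)))
variable (hcπ₂ : ∀ n, (π₂ n).comp (d₃ n) = (d₄ n).comp (π₂ (n + 1)))
variable (hcι₁ : ∀ n, (ι₁ n).comp (d₁ n) = (d₃ n).comp (ι₁ (n + 1)))
variable (hanti : ∀ n, (ι₂ n).comp (π₁ n) = -((π₂ n).comp (ι₁ n)))
variable (hδ : ∀ (n : ℤ) (x : V₃ (n + 1)) (hx : x ∈ ker (π₂ (n + 1)))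
        (hx' : d₃ n x ∈ ker (π₂ n)),
      δ n (Submodule.Quotient.mk ⟨x, hx⟩) = Submodule.Quotient.mk ⟨d₃ n x, hx'⟩)

section Pointwise
include hcπ₁ in
theorem pcπ₁ : ∀ (m : ℤ) (v : V₁ (m+1)), π₁ m (d₁ m v) = d₂ m (π₁ (m+1) v) := fun m v => by
  simpa using LinearMap.congr_fun (hcπ₁ m) v
include hcπ₂ in
theorem pcπ₂ : ∀ (m : ℤ) (v : V₃ (m+1)), π₂ m (d₃ m v) = d₄ m (π₂ (m+1) v) := fun m v => by
  simpa using LinearMap.congr_fun (hcπ₂ m) v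
include hcι₁ in
theorem pcι₁ : ∀ (m : ℤ) (v : V₁ (m+1)), ι₁ m (d₁ m v) = d₃ m (ι₁ (m+1) v) := fun m v => by
  simpa using LinearMap.congr_fun (hcι₁ m) v
include hanti in
theorem panti : ∀ (m : ℤ) (v : V₁ m), ι₂ m (π₁ m v) = -(π₂ m (ι₁ m v)) := fun m v => by
  simpa using LinearMap.congr_fun (hanti m) v
include hanti in
theorem panti' : ∀ (m : ℤ) (v : V₁ m), π₂ m (ι₁ m v) = -(ι₂ m (π₁ m v)) := fun m v => by
  rw [panti π₁ π₂ ι₁ ι₂ hanti m v, neg_neg]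
include hd₃ in
theorem pd₃ : ∀ (m : ℤ) (v : V₃ (m+1+1)), d₃ m (d₃ (m+1) v) = 0 := fun m v => by
  simpa using LinearMap.congr_fun (hd₃ m) v
end Pointwise

set_option maxHeartbeats 2000000 in
include hπ₁ hπ₂ hcπ₁ hcπ₂ hanti in
theorem Gmap_surjective (n : ℤ) :
    Function.Surjective (Gmap d₁ d₂ d₃ d₄ π₁ π₂ ι₁ ι₂ hd₃ hι₁ hcι₁ n) := by
  rintro q
  obtain ⟨⟨⟨a, b, c, e⟩, hz⟩, rfl⟩ := Submodule.Quotient.mk_surjective _ q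
  have hz' := mem_ker.mp hz
  rw [totalD_apply] at hz'
  simp only [Prod.mk_eq_zero] at hz'
  obtain ⟨hz1, hz2, hz3, hz4⟩ := hz'
  rw [sub_eq_zero] at hz2 hz3
  obtain ⟨w, hw⟩ := hπ₁ (n+1+1) b
  obtain ⟨u, hu⟩ := hπ₂ (n+1+1+1) e
  have hpmem : (a - d₁ (n+1) w, c + d₃ (n+1+1) u - ι₁ (n+1+1) w) ∈ Sm d₃ π₁ π₂ ι₁ n := by
    rw [mem_Sm]
    refine ⟨?_, ?_, ?_⟩
    · rw [map_sub, pcπ₁ d₁ d₂ π₁ hcπ₁ (n+1) w, hw, hz2, sub_self]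
    · rw [map_sub, map_add, pcπ₂ d₃ d₄ π₂ hcπ₂ (n+1+1) u, hu,
        panti' π₁ π₂ ι₁ ι₂ hanti (n+1+1) w, hw, sub_neg_eq_add]
      rw [show π₂ (n+1+1) c + d₄ (n+1+1) e + ι₂ (n+1+1) b
          = ι₂ (n+1+1) b + π₂ (n+1+1) c + d₄ (n+1+1) e from by abel]
      exact hz4
    · rw [map_sub, pcι₁ d₁ d₃ ι₁ hcι₁ (n+1) w, map_sub, map_add,
        pd₃ d₃ hd₃ (n+1) u, hz3]
      abel
  refine ⟨⟨(a - d₁ (n+1) w, c + d₃ (n+1+1) u - ι₁ (n+1+1) w), hpmem⟩, ?_⟩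
  rw [Gmap_eq_mk_iff d₁ d₂ d₃ d₄ π₁ π₂ ι₁ ι₂ hd₃ hι₁ hcι₁ n _ _ hpmem]
  refine ⟨(-w, 0, -u, 0), ?_⟩
  rw [totalD_apply]
  show _ = (_, _, _, _) - ((a, b, c, e) : _ × _ × _ × _)
  simp only [Prod.mk_sub_mk, Prod.mk.injEq, map_neg, map_zero]
  refine ⟨?_, ?_, ?_, ?_⟩
  · abel
  · rw [hw]; abel
  · abel
  · rw [hu]; abel

set_option maxHeartbeats 2000000 in
include hι₂ hcπ₂ hanti hδ in
theorem Fmap_surjective (n : ℤ) :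
    Function.Surjective (Fmap d₃ d₄ π₁ π₂ ι₁ δ hcπ₂ hδ n) := by
  rintro q
  obtain ⟨⟨ξv, hξ⟩, rfl⟩ := Submodule.Quotient.mk_surjective _ q
  obtain ⟨⟨x, hx⟩, rfl⟩ := Submodule.Quotient.mk_surjective _ ξv
  have hx0 : π₂ (n+1+1) x = 0 := mem_ker.mp hx
  have hdx : d₃ (n+1) x ∈ ker (π₂ (n+1)) := by
    rw [mem_ker, pcπ₂ d₃ d₄ π₂ hcπ₂ (n+1) x, hx0, map_zero]
  have hξ' : δ (n+1) (Submodule.Quotient.mk ⟨x, hx⟩) = 0 := mem_ker.mp hξ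
  rw [hδ (n+1) x hx hdx, Submodule.Quotient.mk_eq_zero] at hξ'
  have hξ'' : d₃ (n+1) x ∈ range (ι₁ (n+1)) := by simpa using mem_comap.mp hξ'
  obtain ⟨aa, ha⟩ := hξ''
  have hpmem : (aa, x) ∈ Sm d₃ π₁ π₂ ι₁ n := by
    rw [mem_Sm]
    refine ⟨?_, hx0, ha⟩
    apply hι₂ (n+1)
    rw [map_zero, panti π₁ π₂ ι₁ ι₂ hanti (n+1) aa, ha,
      pcπ₂ d₃ d₄ π₂ hcπ₂ (n+1) x, hx0, map_zero, neg_zero]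
  exact ⟨⟨(aa, x), hpmem⟩,
    Fmap_apply d₃ d₄ π₁ π₂ ι₁ δ hcπ₂ hδ n ⟨(aa, x), hpmem⟩ hx hξ⟩

set_option maxHeartbeats 4000000 in
include hπ₁ hπ₂ hι₂ hcπ₂ hanti hδ in
theorem kerF_eq_kerG (n : ℤ) :
    LinearMap.ker (Fmap d₃ d₄ π₁ π₂ ι₁ δ hcπ₂ hδ n) =
      LinearMap.ker (Gmap d₁ d₂ d₃ d₄ π₁ π₂ ι₁ ι₂ hd₃ hι₁ hcι₁ n) := by
  ext p
  obtain ⟨⟨a0, x⟩, hp⟩ := p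
  have hp' : (a0, x) ∈ Sm d₃ π₁ π₂ ι₁ n := hp
  obtain ⟨hp1, hp2, hp3⟩ := hp'
  simp only at hp1 hp2 hp3
  have hp2' : x ∈ ker (π₂ (n+1+1)) := mem_ker.mpr hp2
  rw [mem_ker, mem_ker,
    Gmap_eq_zero_iff d₁ d₂ d₃ d₄ π₁ π₂ ι₁ ι₂ hd₃ hι₁ hcι₁ n a0 x hp,
    Fmap_eq_zero_iff d₃ d₄ π₁ π₂ ι₁ δ hcπ₂ hδ n a0 x hp hp2']
  constructor
  · rintro ⟨η, hη⟩
    obtain ⟨⟨y, hy⟩, rfl⟩ := Submodule.Quotient.mk_surjective _ η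
    have hy0 : π₂ (n+1+1+1) y = 0 := mem_ker.mp hy
    have hdy : d₃ (n+1+1) y ∈ ker (π₂ (n+1+1)) := by
      rw [mem_ker, pcπ₂ d₃ d₄ π₂ hcπ₂ (n+1+1) y, hy0, map_zero]
    rw [hδ (n+1+1) y hy hdy, Submodule.Quotient.eq] at hη
    have hη' : d₃ (n+1+1) y - x ∈ range (ι₁ (n+1+1)) := by
      simpa using mem_comap.mp hη
    obtain ⟨k, hk⟩ := hη'
    refine ⟨(-k, 0, -y, 0), ?_⟩
    rw [totalD_apply]
    simp only [map_neg, map_zero, Prod.mk.injEq]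
    refine ⟨?_, ?_, ?_, ?_⟩
    · apply hι₁ (n+1)
      rw [map_neg, pcι₁ d₁ d₃ ι₁ hcι₁ (n+1) k, hk, map_sub,
        pd₃ d₃ hd₃ (n+1) y, hp3]
      abel
    · have hk0 : π₁ (n+1+1) k = 0 := by
        apply hι₂ (n+1+1)
        rw [map_zero, panti π₁ π₂ ι₁ ι₂ hanti (n+1+1) k, hk, map_sub,
          pcπ₂ d₃ d₄ π₂ hcπ₂ (n+1+1) y, hy0, map_zero, hp2, sub_zero, neg_zero]
      rw [hk0]
      abel
    · rw [hk]; abel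
    · rw [hy0]; abel
  · rintro ⟨⟨a', b', c', e'⟩, heq⟩
    rw [totalD_apply] at heq
    simp only [Prod.mk.injEq] at heq
    obtain ⟨h1', h2', h3', h4'⟩ := heq
    obtain ⟨v, hv⟩ := hπ₁ (n+1+1+1) b'
    obtain ⟨t, ht⟩ := hπ₂ (n+1+1+1+1) e'
    have hy : (-c' + ι₁ (n+1+1+1) v - d₃ (n+1+1+1) t) ∈ ker (π₂ (n+1+1+1)) := by
      rw [mem_ker, map_sub, map_add, map_neg, panti' π₁ π₂ ι₁ ι₂ hanti (n+1+1+1) v, hv,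
        pcπ₂ d₃ d₄ π₂ hcπ₂ (n+1+1+1) t, ht]
      rw [show -(π₂ (n+1+1+1) c') + -(ι₂ (n+1+1+1) b') - d₄ (n+1+1+1) e'
          = -(ι₂ (n+1+1+1) b' + π₂ (n+1+1+1) c' + d₄ (n+1+1+1) e') from by abel, h4',
        neg_zero]
    have hdy : d₃ (n+1+1) (-c' + ι₁ (n+1+1+1) v - d₃ (n+1+1+1) t) ∈ ker (π₂ (n+1+1)) := by
      rw [mem_ker, pcπ₂ d₃ d₄ π₂ hcπ₂ (n+1+1) _, mem_ker.mp hy, map_zero]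
    refine ⟨Submodule.Quotient.mk ⟨(-c' + ι₁ (n+1+1+1) v - d₃ (n+1+1+1) t), hy⟩, ?_⟩
    rw [hδ (n+1+1) _ hy hdy, Submodule.Quotient.eq, mem_comap]
    refine ⟨d₁ (n+1+1) v - a', ?_⟩
    show ι₁ (n+1+1) (d₁ (n+1+1) v - a')
        = d₃ (n+1+1) (-c' + ι₁ (n+1+1+1) v - d₃ (n+1+1+1) t) - x
    rw [map_sub, pcι₁ d₁ d₃ ι₁ hcι₁ (n+1+1) v, map_sub, map_add, map_neg,
      pd₃ d₃ hd₃ (n+1+1) t, ← h3']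
    abel

end AuxMain
/-- Let `C₁, C₂, C₃, C₄` be chain complexes of `ℚ`-vector spaces with degreewise chain maps
`π₁ : C₁ → C₂`, `π₂ : C₃ → C₄` surjective, `ι₁ : C₁ → C₃`, `ι₂ : C₂ → C₄` injective, such that
the square anticommutes (`ι₂ ∘ π₁ = −π₂ ∘ ι₁`).  Let `δ` be the differential induced by `d₃`
on the subquotient complex `K = (Ker π₂)/(Im ι₁ ∩ Ker π₂)` of `C₃` (characterized by `hδ`).
Then the homology of the total complex of the bicomplex `C₁ → C₂ ⊕ C₃ → C₄` is isomorphic,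
degree by degree, to the homology of `K` (both homologies are expressed as the subquotient
`Ker(d)/(Im(d) ∩ Ker(d))`). -/
theorem stmt_7
    (d₁ : ∀ n : ℤ, V₁ (n + 1) →ₗ[ℚ] V₁ n) (d₂ : ∀ n : ℤ, V₂ (n + 1) →ₗ[ℚ] V₂ n)
    (d₃ : ∀ n : ℤ, V₃ (n + 1) →ₗ[ℚ] V₃ n) (d₄ : ∀ n : ℤ, V₄ (n + 1) →ₗ[ℚ] V₄ n)
    (π₁ : ∀ n : ℤ, V₁ n →ₗ[ℚ] V₂ n) (π₂ : ∀ n : ℤ, V₃ n →ₗ[ℚ] V₄ n)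
    (ι₁ : ∀ n : ℤ, V₁ n →ₗ[ℚ] V₃ n) (ι₂ : ∀ n : ℤ, V₂ n →ₗ[ℚ] V₄ n)
    (hd₁ : ∀ n, (d₁ n).comp (d₁ (n + 1)) = 0) (hd₂ : ∀ n, (d₂ n).comp (d₂ (n + 1)) = 0)
    (hd₃ : ∀ n, (d₃ n).comp (d₃ (n + 1)) = 0) (hd₄ : ∀ n, (d₄ n).comp (d₄ (n + 1)) = 0)
    (hπ₁ : ∀ n, Function.Surjective (π₁ n)) (hπ₂ : ∀ n, Function.Surjective (π₂ n))
    (hι₁ : ∀ n, Function.Injective (ι₁ n)) (hι₂ : ∀ n, Function.Injective (ι₂ n))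
    (hcπ₁ : ∀ n, (π₁ n).comp (d₁ n) = (d₂ n).comp (π₁ (n + 1)))
    (hcπ₂ : ∀ n, (π₂ n).comp (d₃ n) = (d₄ n).comp (π₂ (n + 1)))
    (hcι₁ : ∀ n, (ι₁ n).comp (d₁ n) = (d₃ n).comp (ι₁ (n + 1)))
    (hcι₂ : ∀ n, (ι₂ n).comp (d₂ n) = (d₄ n).comp (ι₂ (n + 1)))
    (hanti : ∀ n, (ι₂ n).comp (π₁ n) = -((π₂ n).comp (ι₁ n)))
    (δ : ∀ n : ℤ,
      (↥(ker (π₂ (n + 1))) ⧸ comap (ker (π₂ (n + 1))).subtype (range (ι₁ (n + 1)))) →ₗ[ℚ]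
        (↥(ker (π₂ n)) ⧸ comap (ker (π₂ n)).subtype (range (ι₁ n))))
    (hδ : ∀ (n : ℤ) (x : V₃ (n + 1)) (hx : x ∈ ker (π₂ (n + 1)))
        (hx' : d₃ n x ∈ ker (π₂ n)),
      δ n (Submodule.Quotient.mk ⟨x, hx⟩) = Submodule.Quotient.mk ⟨d₃ n x, hx'⟩) :
    ∀ n : ℤ,
      Nonempty
        ((↥(ker (totalD d₁ d₂ d₃ d₄ π₁ π₂ ι₁ ι₂ n)) ⧸
            comap (ker (totalD d₁ d₂ d₃ d₄ π₁ π₂ ι₁ ι₂ n)).subtype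
              (range (totalD d₁ d₂ d₃ d₄ π₁ π₂ ι₁ ι₂ (n + 1)))) ≃ₗ[ℚ]
          (↥(ker (δ (n + 1))) ⧸
            comap (ker (δ (n + 1))).subtype (range (δ (n + 1 + 1))))) := by
  intro n
  exact ⟨((((Gmap d₁ d₂ d₃ d₄ π₁ π₂ ι₁ ι₂ hd₃ hι₁ hcι₁ n).quotKerEquivOfSurjective
      (Gmap_surjective d₁ d₂ d₃ d₄ π₁ π₂ ι₁ ι₂ hd₃ hπ₁ hπ₂ hι₁ hcπ₁ hcπ₂ hcι₁ hanti n)).symm.trans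
    (Submodule.quotEquivOfEq _ _
      (kerF_eq_kerG d₁ d₂ d₃ d₄ π₁ π₂ ι₁ ι₂ δ hd₃ hπ₁ hπ₂ hι₁ hι₂ hcπ₂ hcι₁ hanti hδ n).symm)).trans
    ((Fmap d₃ d₄ π₁ π₂ ι₁ δ hcπ₂ hδ n).quotKerEquivOfSurjective
      (Fmap_surjective d₃ d₄ π₁ π₂ ι₁ ι₂ δ hι₂ hcπ₂ hanti hδ n)))⟩
end
end

section
/- Let T be a finite rooted directed tree with k vertices and root r, and let variables X_1, …, X_k be given. For a bijection φ from the vertices of T to {X_1,…,X_k}, set ⟨T,φ⟩ = (Π_{v ≠ r} φ(v)) / (Π_{(v_1 → v_2) ∈ E(T)} (φ(v_1) − φ(v_2))). Then the sum ⟨T⟩ = Σ_φ ⟨T,φ⟩ over all bijections φ is a symmetric polynomial of degree 0 in X_1,…,X_k, i.e., a constant integer. -/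
open MvPolynomial

/-- The rooted-tree evaluation `⟨T⟩ = Σ_φ ⟨T,φ⟩`: `T` has vertex set `Fin k`, directed
edge set `E`, and root `r`; the sum is over all bijections `φ` (equivalently permutations
`σ` of `Fin k`, with `φ v = X (σ v)`) of
`(Π_{v ≠ r} φ(v)) / (Π_{(v₁ → v₂) ∈ E} (φ(v₁) − φ(v₂)))`,
computed in the field of rational functions `ℚ(X_1, …, X_k)`. -/
noncomputable def treeEval (k : ℕ) (E : Finset (Fin k × Fin k)) (r : Fin k) :
    FractionRing (MvPolynomial (Fin k) ℚ) :=
  ∑ σ : Equiv.Perm (Fin k),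
    (∏ v ∈ Finset.univ.erase r,
        algebraMap (MvPolynomial (Fin k) ℚ) (FractionRing (MvPolynomial (Fin k) ℚ))
          (X (σ v))) /
      ∏ e ∈ E,
        algebraMap (MvPolynomial (Fin k) ℚ) (FractionRing (MvPolynomial (Fin k) ℚ))
          (X (σ e.1) - X (σ e.2))

/-!
Multiplying by the Vandermonde polynomial `V = ∏_{i<j} (X j - X i)` clears every denominator:
for each labelling `σ` the edge factors `X (σ a) - X (σ b)` are, up to sign, distinct factors
of `V`. The resulting numerator `N` is alternating, since relabelling by a transposition permutes
the summands and negates `V`; hence `V ∣ N`, the linear factors being pairwise coprime primes.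
A tree has `k - 1` edges, so `deg N ≤ deg V` and `N / V` is a constant. Carrying out the
argument over `ℤ` rather than `ℚ` makes that constant an integer.
-/

open Finset

namespace MvPolynomial

variable {R σ : Type*} [CommRing R]

lemma X_sub_X_dvd_sub_rename_swap [DecidableEq σ] (i j : σ) (p : MvPolynomial σ R) :
    X i - X j ∣ p - rename (Equiv.swap i j) p := by
  set I := Ideal.span {(X i - X j : MvPolynomial σ R)}
  have hij : Ideal.Quotient.mk I (X i) = Ideal.Quotient.mk I (X j) :=
    Ideal.Quotient.eq.2 (Ideal.mem_span_singleton_self _)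
  have h : (Ideal.Quotient.mkₐ R I).comp (rename (Equiv.swap i j)) = Ideal.Quotient.mkₐ R I := by
    ext v
    simp only [AlgHom.comp_apply, rename_X, Ideal.Quotient.mkₐ_eq_mk]
    rcases eq_or_ne v i with rfl | hvi
    · simpa using hij.symm
    rcases eq_or_ne v j with rfl | hvj
    · simpa using hij
    · rw [Equiv.swap_apply_of_ne_of_ne hvi hvj]
  rw [← Ideal.mem_span_singleton, ← Ideal.Quotient.eq]
  exact (DFunLike.congr_fun h p).symm

lemma X_sub_X_ne_zero [Nontrivial R] {a b : σ} (h : a ≠ b) : (X a - X b : MvPolynomial σ R) ≠ 0 :=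
  sub_ne_zero.2 fun hX => h (X_injective hX)

lemma totalDegree_X_sub_X [Nontrivial R] {a b : σ} (h : a ≠ b) :
    (X a - X b : MvPolynomial σ R).totalDegree = 1 :=
  ((isHomogeneous_X R a).sub (isHomogeneous_X R b)).totalDegree (X_sub_X_ne_zero h)

lemma irreducible_X_sub_X [IsDomain R] {a b : σ} (h : a ≠ b) :
    Irreducible (X a - X b : MvPolynomial σ R) := by
  classical
  refine irreducible_of_totalDegree_eq_one (totalDegree_X_sub_X h) fun x hx => ?_
  exact isUnit_of_dvd_one <| by
    simpa [coeff_X, Finsupp.single_left_inj one_ne_zero, h.symm] using hx (Finsupp.single a 1)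

lemma sym2_eq_of_X_sub_X_dvd [Nontrivial R] {a b c d : σ} (hcd : c ≠ d)
    (h : (X a - X b : MvPolynomial σ R) ∣ X c - X d) : s(a, b) = s(c, d) := by
  classical
  by_contra hne
  obtain ⟨t, htcd, hta, htb⟩ : ∃ t, (t = c ∨ t = d) ∧ t ≠ a ∧ t ≠ b := by
    by_contra! hall
    have hc := hall c (.inl rfl)
    have hd := hall d (.inr rfl)
    grind [Sym2.eq_iff]
  -- the indicator of `t` is a common zero of `X a` and `X b` but not of `X c - X d`
  have := map_dvd (eval fun v => if v = t then (1 : R) else 0) h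
  rcases htcd with rfl | rfl <;> simp_all [eq_comm]

section UniqueFactorization

variable [IsDomain R] [UniqueFactorizationMonoid R]

lemma prod_X_sub_X_dvd {ι : Type*} {s : Finset ι} {a b : ι → σ}
    (hab : ∀ i ∈ s, a i ≠ b i) (hinj : Set.InjOn (fun i => s(a i, b i)) s)
    {p : MvPolynomial σ R} (hp : ∀ i ∈ s, X (a i) - X (b i) ∣ p) :
    ∏ i ∈ s, (X (a i) - X (b i)) ∣ p := by
  refine Finset.prod_dvd_of_isRelPrime (fun i hi j hj hij => ?_) hp
  refine (irreducible_X_sub_X (hab i hi)).isRelPrime_iff_not_dvd.2 fun hdvd => hij ?_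
  exact hinj hi hj (sym2_eq_of_X_sub_X_dvd (hab j hj) hdvd)

lemma X_sub_X_dvd_of_rename_swap_eq_neg [DecidableEq σ] (h2 : (2 : R) ≠ 0) {i j : σ}
    (hij : i ≠ j) {p : MvPolynomial σ R} (hp : rename (Equiv.swap i j) p = -p) :
    X i - X j ∣ p := by
  have hdvd := X_sub_X_dvd_sub_rename_swap i j p
  rw [hp, sub_neg_eq_add, ← two_mul] at hdvd
  refine ((irreducible_X_sub_X hij).prime.dvd_or_dvd hdvd).resolve_left fun h2dvd => h2 ?_
  simpa [map_ofNat] using map_dvd (eval 0) h2dvd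

end UniqueFactorization

variable (R) in
noncomputable def vandermonde (k : ℕ) : MvPolynomial (Fin k) R :=
  ∏ i : Fin k, ∏ j ∈ Ioi i, (X j - X i)

variable {k : ℕ}

lemma rename_swap_vandermonde {i j : Fin k} (hij : i ≠ j) :
    rename (Equiv.swap i j) (vandermonde R k) = -vandermonde R k := by
  have hmap : (rename (Equiv.swap i j)).mapMatrix (Matrix.vandermonde X) =
      (Matrix.vandermonde (X : Fin k → MvPolynomial (Fin k) R)).submatrix (Equiv.swap i j) id := by
    ext a b
    simp [Matrix.vandermonde_apply]
  rw [vandermonde, ← Matrix.det_vandermonde, AlgHom.map_det, hmap, Matrix.det_permute,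
    Equiv.Perm.sign_swap hij, Units.val_neg, Units.val_one, Int.cast_neg, Int.cast_one, neg_one_mul]

lemma vandermonde_ne_zero [IsDomain R] : vandermonde R k ≠ 0 :=
  prod_ne_zero_iff.2 fun _ _ => prod_ne_zero_iff.2 fun _ hj =>
    X_sub_X_ne_zero (mem_Ioi.1 hj).ne'

lemma X_sub_X_dvd_vandermonde {a b : Fin k} (hab : a ≠ b) : X a - X b ∣ vandermonde R k := by
  have hfactor {i j : Fin k} (h : i < j) : X j - X i ∣ vandermonde R k :=
    (dvd_prod_of_mem (fun j => X j - X i) (mem_Ioi.2 h)).trans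
      (dvd_prod_of_mem (fun i => ∏ j ∈ Ioi i, (X j - X i)) (mem_univ i))
  rcases hab.lt_or_gt with h | h
  · rw [← neg_sub]
    exact neg_dvd.2 (hfactor h)
  · exact hfactor h

lemma vandermonde_dvd_of_rename_swap_eq_neg [IsDomain R] [UniqueFactorizationMonoid R]
    (h2 : (2 : R) ≠ 0) {p : MvPolynomial (Fin k) R}
    (hp : ∀ i j, i ≠ j → rename (Equiv.swap i j) p = -p) : vandermonde R k ∣ p := by
  have hlt {x : Σ _ : Fin k, Fin k} (hx : x ∈ univ.sigma Ioi) : x.1 < x.2 :=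
    mem_Ioi.1 (mem_sigma.1 hx).2
  rw [vandermonde, prod_sigma']
  refine prod_X_sub_X_dvd (fun x hx => (hlt hx).ne') ?_
    fun x hx => X_sub_X_dvd_of_rename_swap_eq_neg h2 (hlt hx).ne' (hp _ _ (hlt hx).ne')
  rintro ⟨i, j⟩ hij ⟨i', j'⟩ hij' h
  rcases Sym2.eq_iff.1 h with ⟨rfl, rfl⟩ | ⟨rfl, rfl⟩
  · rfl
  · exact absurd ((hlt hij).trans (hlt hij')) (lt_irrefl _)

lemma exists_eq_mul_C_of_dvd_of_totalDegree_le [IsDomain R] {f g : MvPolynomial σ R} (hf : f ≠ 0)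
    (hfg : f ∣ g) (hg : g.totalDegree ≤ f.totalDegree) : ∃ γ : R, g = f * C γ := by
  obtain ⟨c, rfl⟩ := hfg
  rcases eq_or_ne c 0 with rfl | hc
  · exact ⟨0, by simp⟩
  rw [totalDegree_mul_of_isDomain hf hc] at hg
  exact ⟨_, congrArg (f * ·) (totalDegree_eq_zero_iff_eq_C.1 (by omega))⟩

end MvPolynomial

section RootedTree

variable {R : Type*} [CommRing R] {k : ℕ}

variable (R) in
noncomputable def edgeProduct (E : Finset (Fin k × Fin k)) (σ : Equiv.Perm (Fin k)) :
    MvPolynomial (Fin k) R :=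
  ∏ e ∈ E, (X (σ e.1) - X (σ e.2))

variable (R) in
noncomputable def nonRootProduct (r : Fin k) (σ : Equiv.Perm (Fin k)) : MvPolynomial (Fin k) R :=
  ∏ v ∈ univ.erase r, X (σ v)

variable {E : Finset (Fin k × Fin k)} {r : Fin k}

lemma rename_edgeProduct (τ σ : Equiv.Perm (Fin k)) :
    rename τ (edgeProduct R E σ) = edgeProduct R E (τ * σ) := by
  simp [edgeProduct, map_prod]

lemma rename_nonRootProduct (τ σ : Equiv.Perm (Fin k)) :
    rename τ (nonRootProduct R r σ) = nonRootProduct R r (τ * σ) := by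
  simp [nonRootProduct, map_prod]

lemma totalDegree_nonRootProduct_le (σ : Equiv.Perm (Fin k)) :
    (nonRootProduct R r σ).totalDegree ≤ k - 1 := by
  have hhom := IsHomogeneous.prod (univ.erase r) (fun v => (X (σ v) : MvPolynomial (Fin k) R))
    (fun _ => 1) fun v _ => isHomogeneous_X R (σ v)
  simpa [nonRootProduct] using hhom.totalDegree_le

lemma edgeProduct_ne_zero [IsDomain R] (hloop : ∀ e ∈ E, e.1 ≠ e.2) (σ : Equiv.Perm (Fin k)) :
    edgeProduct R E σ ≠ 0 :=
  prod_ne_zero_iff.2 fun e he => X_sub_X_ne_zero (σ.injective.ne (hloop e he))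

lemma totalDegree_edgeProduct [IsDomain R] (hloop : ∀ e ∈ E, e.1 ≠ e.2) (σ : Equiv.Perm (Fin k)) :
    (edgeProduct R E σ).totalDegree = #E := by
  have hhom := IsHomogeneous.prod E (fun e => (X (σ e.1) - X (σ e.2) : MvPolynomial (Fin k) R))
    (fun _ => 1) fun e _ => (isHomogeneous_X R (σ e.1)).sub (isHomogeneous_X R (σ e.2))
  simpa [edgeProduct] using hhom.totalDegree (edgeProduct_ne_zero hloop σ)

lemma injOn_sym2_of_asymm (hdouble : ∀ a b : Fin k, (a, b) ∈ E → (b, a) ∉ E) :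
    Set.InjOn (fun e => s(e.1, e.2)) (E : Set (Fin k × Fin k)) := by
  rintro ⟨a, b⟩ he ⟨c, d⟩ hf h
  rcases Sym2.eq_iff.1 h with ⟨rfl, rfl⟩ | ⟨rfl, rfl⟩
  · rfl
  · exact absurd hf (hdouble a b he)

lemma card_add_one_of_isTree_fromRel (hloop : ∀ e ∈ E, e.1 ≠ e.2)
    (hdouble : ∀ a b : Fin k, (a, b) ∈ E → (b, a) ∉ E)
    (htree : (SimpleGraph.fromRel fun a b => (a, b) ∈ E).IsTree) : #E + 1 = k := by
  classical
  have hedges : (SimpleGraph.fromRel fun a b => (a, b) ∈ E).edgeFinset =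
      E.image fun e => s(e.1, e.2) := by
    ext z
    induction z using Sym2.ind with | _ a b => ?_
    simp only [SimpleGraph.mem_edgeFinset, SimpleGraph.mem_edgeSet, SimpleGraph.fromRel_adj,
      ne_eq, mem_image, Sym2.eq, Prod.mk.eta, Sym2.rel_iff', Prod.swap_prod_mk, Prod.exists,
      Prod.mk.injEq]
    constructor
    · rintro ⟨-, hab | hba⟩
      · exact ⟨a, b, hab, .inl ⟨rfl, rfl⟩⟩
      · exact ⟨b, a, hba, .inr ⟨rfl, rfl⟩⟩
    · rintro ⟨c, d, hcd, ⟨rfl, rfl⟩ | ⟨rfl, rfl⟩⟩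
      · exact ⟨hloop _ hcd, .inl hcd⟩
      · exact ⟨(hloop _ hcd).symm, .inr hcd⟩
  simpa [hedges, card_image_of_injOn (injOn_sym2_of_asymm hdouble)] using htree.card_edgeFinset

lemma edgeProduct_dvd_vandermonde [IsDomain R] [UniqueFactorizationMonoid R]
    (hloop : ∀ e ∈ E, e.1 ≠ e.2) (hdouble : ∀ a b : Fin k, (a, b) ∈ E → (b, a) ∉ E)
    (σ : Equiv.Perm (Fin k)) : edgeProduct R E σ ∣ vandermonde R k := by
  refine prod_X_sub_X_dvd (fun e he => σ.injective.ne (hloop e he)) ?_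
    fun e he => X_sub_X_dvd_vandermonde (σ.injective.ne (hloop e he))
  intro e he f hf h
  exact injOn_sym2_of_asymm hdouble he hf (Sym2.eq_iff.2 (by simpa using Sym2.eq_iff.1 h))

lemma rename_sum_nonRootProduct_mul [IsDomain R] (hloop : ∀ e ∈ E, e.1 ≠ e.2)
    {q : Equiv.Perm (Fin k) → MvPolynomial (Fin k) R}
    (hq : ∀ σ, vandermonde R k = edgeProduct R E σ * q σ) {τ : Equiv.Perm (Fin k)}
    (hτ : rename τ (vandermonde R k) = -vandermonde R k) :
    rename τ (∑ σ, nonRootProduct R r σ * q σ) = -∑ σ, nonRootProduct R r σ * q σ := by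
  have hq_rename (σ : Equiv.Perm (Fin k)) : rename τ (q σ) = -q (τ * σ) :=
    mul_left_cancel₀ (edgeProduct_ne_zero hloop (τ * σ)) <| calc
      _ = rename τ (vandermonde R k) := by rw [hq σ, map_mul, rename_edgeProduct]
      _ = _ := by rw [hτ, hq (τ * σ), mul_neg]
  simp only [map_sum, map_mul, rename_nonRootProduct, hq_rename, mul_neg, sum_neg_distrib]
  exact congrArg _ (Equiv.sum_comp (Equiv.mulLeft τ) fun σ => nonRootProduct R r σ * q σ)

lemma totalDegree_nonRootProduct_mul_le [IsDomain R] (hloop : ∀ e ∈ E, e.1 ≠ e.2)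
    (hcard : #E + 1 = k) {σ : Equiv.Perm (Fin k)} {q : MvPolynomial (Fin k) R}
    (hq : vandermonde R k = edgeProduct R E σ * q) :
    (nonRootProduct R r σ * q).totalDegree ≤ (vandermonde R k).totalDegree := by
  have hq0 : q ≠ 0 := by
    rintro rfl
    exact vandermonde_ne_zero (by simpa using hq)
  rw [hq, totalDegree_mul_of_isDomain (edgeProduct_ne_zero hloop σ) hq0,
    totalDegree_edgeProduct hloop]
  have hnum := totalDegree_nonRootProduct_le (R := R) (r := r) σ
  exact (totalDegree_mul _ _).trans (by omega)

theorem exists_sum_div_edgeProduct_eq_C [IsDomain R] [UniqueFactorizationMonoid R]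
    (h2 : (2 : R) ≠ 0) {K : Type*} [Field K] {φ : MvPolynomial (Fin k) R →+* K}
    (hφ : Function.Injective φ) (hloop : ∀ e ∈ E, e.1 ≠ e.2)
    (hdouble : ∀ a b : Fin k, (a, b) ∈ E → (b, a) ∉ E) (hcard : #E + 1 = k) :
    ∃ γ : R, ∑ σ, φ (nonRootProduct R r σ) / φ (edgeProduct R E σ) = φ (C γ) := by
  choose q hq using edgeProduct_dvd_vandermonde (R := R) hloop hdouble
  have hdvd : vandermonde R k ∣ ∑ σ, nonRootProduct R r σ * q σ :=
    vandermonde_dvd_of_rename_swap_eq_neg h2 fun i j hij =>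
      rename_sum_nonRootProduct_mul hloop hq (rename_swap_vandermonde hij)
  obtain ⟨γ, hγ⟩ := exists_eq_mul_C_of_dvd_of_totalDegree_le vandermonde_ne_zero hdvd
    (totalDegree_finsetSum_le fun σ _ => totalDegree_nonRootProduct_mul_le hloop hcard (hq σ))
  refine ⟨γ, mul_left_cancel₀ ((map_ne_zero_iff φ hφ).2 vandermonde_ne_zero) ?_⟩
  rw [← map_mul, ← hγ, map_sum, mul_sum]
  refine sum_congr rfl fun σ _ => ?_
  have hden := (map_ne_zero_iff φ hφ).2 (edgeProduct_ne_zero hloop σ)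
  rw [hq σ, map_mul, map_mul]
  field_simp

end RootedTree

theorem stmt_9_general (k : ℕ) (E : Finset (Fin k × Fin k)) (r : Fin k)
    (hloop : ∀ e ∈ E, e.1 ≠ e.2)
    (hdouble : ∀ a b : Fin k, (a, b) ∈ E → (b, a) ∉ E)
    (htree : (SimpleGraph.fromRel (fun a b => (a, b) ∈ E)).IsTree) :
    ∃ c : ℤ, treeEval k E r = (c : FractionRing (MvPolynomial (Fin k) ℚ)) := by
  let φ := (algebraMap (MvPolynomial (Fin k) ℚ) (FractionRing (MvPolynomial (Fin k) ℚ))).comp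
    (MvPolynomial.map (Int.castRingHom ℚ))
  have hφ : Function.Injective φ :=
    (IsFractionRing.injective (MvPolynomial (Fin k) ℚ) _).comp
      (map_injective (Int.castRingHom ℚ) Int.cast_injective)
  obtain ⟨γ, hγ⟩ := exists_sum_div_edgeProduct_eq_C (r := r) two_ne_zero hφ hloop hdouble
    (card_add_one_of_isTree_fromRel hloop hdouble htree)
  refine ⟨γ, ?_⟩
  simpa [φ, treeEval, edgeProduct, nonRootProduct, map_prod] using hγ

/-- For a finite rooted directed tree `T` with `k` vertices (vertex set `Fin k`, directed
edge set `E` without loops or doubled edges, whose underlying undirected graph is a tree)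
and root `r`, the total evaluation `⟨T⟩` is a constant integer (in particular a symmetric
polynomial of degree 0 in `X_1, …, X_k`). -/
theorem stmt_9 (k : ℕ) (hk : 1 ≤ k) (E : Finset (Fin k × Fin k)) (r : Fin k)
    (hloop : ∀ e ∈ E, e.1 ≠ e.2)
    (hdouble : ∀ a b : Fin k, (a, b) ∈ E → (b, a) ∉ E)
    (htree : (SimpleGraph.fromRel (fun a b => (a, b) ∈ E)).IsTree) :
    ∃ c : ℤ, treeEval k E r = (c : FractionRing (MvPolynomial (Fin k) ℚ)) :=
  stmt_9_general k E r hloop hdouble htree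
end
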